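/- arXiv:0704.3313 — 2 statements merged into one kernel-verified Lean document; each statement's English description precedes it below -/
import Mathlib

section
/- Two finite multisets S and T of elements of a field K, each of size at most d, are equal if and only if their power sums agree: s_k(S) = s_k(T) for all 0 ≤ k ≤ d, where s_0 denotes cardinality (as a natural number) and K has characteristic 0 or characteristic p > d. -/
/-!
Newton's identities `k e_k = ± ∑_{i<k} ± e_i s_{k-i}` recover the elementary symmetric functions
`e_1, …, e_d` from the power sums `s_1, …, s_d`, provided `1, …, d` are invertible in `K`, which
is what the characteristic assumption guarantees. The cardinality together with the `e_k` determines
the polynomial `∏_{x ∈ S} (X - x)`, whose multiset of roots is `S`.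
-/

open Finset Polynomial

namespace Multiset

variable {R : Type*} [CommRing R]

theorem mul_esymm_eq_sum (s : Multiset R) (k : ℕ) :
    k * s.esymm k = (-1) ^ (k + 1) *
      ∑ a ∈ HasAntidiagonal.antidiagonal k with a.1 < k, (-1) ^ a.1 * s.esymm a.1 * (s.map (· ^ a.2)).sum := by
  obtain ⟨l, rfl⟩ : ∃ l : List R, ↑l = s := ⟨s.toList, s.coe_toList⟩
  have huniv : (Finset.univ.val.map l.get : Multiset R) = ↑l := by
    rw [Fin.univ_def]
    exact congrArg _ (List.map_get_finRange l)
  have h := congrArg (MvPolynomial.aeval l.get) (MvPolynomial.mul_esymm_eq_sum (Fin l.length) R k)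
  simp only [map_mul, map_natCast, map_pow, map_neg, map_one, map_sum,
    MvPolynomial.aeval_esymm_eq_multiset_esymm, MvPolynomial.psum, MvPolynomial.aeval_X,
    huniv] at h
  convert h using 4 with a _
  rw [← huniv, map_map]
  rfl

theorem esymm_eq_of_sum_map_pow_eq [NoZeroDivisors R] {s t : Multiset R} {d : ℕ}
    (hd : ∀ k : ℕ, 1 ≤ k → k ≤ d → (k : R) ≠ 0)
    (h : ∀ k : ℕ, 1 ≤ k → k ≤ d → (s.map (· ^ k)).sum = (t.map (· ^ k)).sum) :
    ∀ k ≤ d, s.esymm k = t.esymm k := by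
  intro k
  induction k using Nat.strong_induction_on with
  | _ k ih =>
    intro hkd
    rcases Nat.eq_zero_or_pos k with rfl | hk
    · simp [esymm]
    · refine mul_left_cancel₀ (hd k hk hkd) ?_
      rw [mul_esymm_eq_sum, mul_esymm_eq_sum]
      congr 1
      refine sum_congr rfl fun a ha => ?_
      rw [Finset.mem_filter, HasAntidiagonal.mem_antidiagonal] at ha
      rw [ih a.1 ha.2 (by omega), h a.2 (by omega) (by omega)]

theorem eq_of_card_eq_of_esymm_eq [IsDomain R] {s t : Multiset R} (hcard : card s = card t)
    (h : ∀ k ≤ card s, s.esymm k = t.esymm k) : s = t := by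
  have hprod : (s.map fun a => X - C a).prod = (t.map fun a => X - C a).prod := by
    rw [prod_X_sub_X_eq_sum_esymm, prod_X_sub_X_eq_sum_esymm, ← hcard]
    refine sum_congr rfl fun k hk => ?_
    rw [h k (Nat.lt_succ_iff.mp (mem_range.mp hk))]
  simpa only [roots_multiset_prod_X_sub_C] using congrArg roots hprod

end Multiset

theorem multiset_eq_iff_power_sums_eq_general {K : Type*} [Field K] (d : ℕ)
    (hchar : CharZero K ∨ ∃ p : ℕ, p.Prime ∧ CharP K p ∧ d < p)
    (S T : Multiset K) (hS : Multiset.card S ≤ d) :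
    S = T ↔
      (Multiset.card S = Multiset.card T ∧
        ∀ k : ℕ, 1 ≤ k → k ≤ d →
          (S.map (fun x => x ^ k)).sum = (T.map (fun x => x ^ k)).sum) := by
  refine ⟨by rintro rfl; exact ⟨rfl, fun _ _ _ => rfl⟩, fun ⟨hcard, hpow⟩ => ?_⟩
  have hd : ∀ k : ℕ, 1 ≤ k → k ≤ d → (k : K) ≠ 0 := by
    intro k hk hkd
    rcases hchar with _ | ⟨p, -, _, hdp⟩
    · exact Nat.cast_ne_zero.mpr (by omega)
    · rw [Ne, CharP.cast_eq_zero_iff K p]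
      exact Nat.not_dvd_of_pos_of_lt hk (by omega)
  exact Multiset.eq_of_card_eq_of_esymm_eq hcard fun k hk =>
    Multiset.esymm_eq_of_sum_map_pow_eq hd hpow k (hk.trans hS)

/-- Two multisets of size at most `d` over a field of characteristic `0` or `p > d`
are equal iff their power sums `s_0, …, s_d` agree (with `s_0` the cardinality). -/
theorem multiset_eq_iff_power_sums_eq {K : Type*} [Field K] (d : ℕ)
    (hchar : CharZero K ∨ ∃ p : ℕ, p.Prime ∧ CharP K p ∧ d < p)
    (S T : Multiset K) (hS : Multiset.card S ≤ d) (hT : Multiset.card T ≤ d) :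
    S = T ↔
      (Multiset.card S = Multiset.card T ∧
        ∀ k : ℕ, 1 ≤ k → k ≤ d →
          (S.map (fun x => x ^ k)).sum = (T.map (fun x => x ^ k)).sum) :=
  multiset_eq_iff_power_sums_eq_general d hchar S T hS
end

section
/- In the random multigraph model with x edges and y = c·x vertices (each edge choosing an unordered pair of distinct vertices uniformly at random and independently), the probability that the graph is not simple or contains a cycle is O(1/c²); in particular, choosing c = Θ(√(1/ε)) makes this failure probability at most ε/4. -/
/-!
A bad graph always contains a set `S` of `s ≥ 2` vertices spanning `s` of the edges: a repeated
pair gives two edges on two vertices, and for a cycle `F` the vertices `S` of nonzero degree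
satisfy `2 |S| ≤ ∑ deg = 2 |F|`. For fixed `S` and `s` edges the chance that all of them land
inside `S` is at most `(s² / N)^s`, where `N = y.choose 2 ≥ y² / 4`, so a union bound together
with `n.choose s * s^s ≤ (e n)^s` bounds the failure probability by
`∑_{s ≥ 2} (4e² x / y)^s = O((x / y)²)`.
-/

/-- The random multigraph on `y` vertices with `x` independent uniformly random
edges (an edge is an ordered pair `(u,v)` with `u < v`, modeling an unordered
pair of distinct vertices) is "bad" if it is not simple (two edges choose the
same vertex pair) or contains a cycle (a nonempty edge set in which every
vertex has degree `0` or at least `2`). -/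
def BadGraph (x y : ℕ) (ω : Fin x → {p : Fin y × Fin y // p.1 < p.2}) : Prop :=
  (∃ e e' : Fin x, e ≠ e' ∧ ω e = ω e') ∨
  (∃ F : Finset (Fin x), F.Nonempty ∧ ∀ v : Fin y,
    ((∑ e ∈ F, ((if (ω e : Fin y × Fin y).1 = v then 1 else 0) +
        (if (ω e : Fin y × Fin y).2 = v then 1 else 0))) = 0 ∨
     2 ≤ ∑ e ∈ F, ((if (ω e : Fin y × Fin y).1 = v then 1 else 0) +
        (if (ω e : Fin y × Fin y).2 = v then 1 else 0))))

open Classical in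
/-- The probability, under the uniform distribution over all edge choices, that
the random multigraph is not simple or contains a cycle. -/
noncomputable def badProb (x y : ℕ) : ℝ :=
  ((Finset.univ.filter (fun ω : Fin x → {p : Fin y × Fin y // p.1 < p.2} =>
      BadGraph x y ω)).card : ℝ)
    / ((Finset.univ : Finset (Fin x → {p : Fin y × Fin y // p.1 < p.2})).card : ℝ)

open Finset

abbrev VertexPair (y : ℕ) := {p : Fin y × Fin y // p.1 < p.2}

lemma card_vertexPair (y : ℕ) : Fintype.card (VertexPair y) = y.choose 2 := by
  rw [Fintype.card_subtype, Fintype.card_product_filter_lt, Fintype.card_fin]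

lemma sq_le_four_mul_card_vertexPair {y : ℕ} (hy : 2 ≤ y) :
    (y : ℝ) ^ 2 ≤ 4 * Fintype.card (VertexPair y) := by
  have hy' : (2 : ℝ) ≤ y := by exact_mod_cast hy
  rw [card_vertexPair, Nat.cast_choose_two]
  nlinarith

theorem card_filter_forall_mem_mul_pow {ι α : Type*} [Fintype ι] [DecidableEq ι] [Fintype α]
    [DecidableEq α] (F : Finset ι) (T : Finset α) :
    #{f : ι → α | ∀ i ∈ F, f i ∈ T} * Fintype.card α ^ #F
      = #T ^ #F * Fintype.card α ^ Fintype.card ι := by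
  have hpi : ({f : ι → α | ∀ i ∈ F, f i ∈ T} : Finset (ι → α))
      = Fintype.piFinset fun i => if i ∈ F then T else univ := by
    ext f
    simp only [mem_filter, mem_univ, true_and, Fintype.mem_piFinset]
    refine forall_congr' fun i => ?_
    split_ifs <;> simp_all
  rw [hpi, Fintype.card_piFinset, ← card_add_card_compl F, pow_add]
  simp only [apply_ite card, card_univ, prod_ite, filter_mem_eq_inter, univ_inter, prod_const]
  rw [show ({i | i ∉ F} : Finset ι) = Fᶜ by ext; simp]
  ring

def pairsWithin {y : ℕ} (S : Finset (Fin y)) : Finset (VertexPair y) :=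
  {p | p.1.1 ∈ S ∧ p.1.2 ∈ S}

lemma card_pairsWithin_le {y : ℕ} (S : Finset (Fin y)) : #(pairsWithin S) ≤ #S ^ 2 := by
  rw [sq, ← card_product]
  exact card_le_card_of_injOn Subtype.val (fun p hp => by simpa [pairsWithin] using hp)
    Subtype.val_injective.injOn

lemma two_le_card_of_mem_pairsWithin {y : ℕ} {S : Finset (Fin y)} {p : VertexPair y}
    (hp : p ∈ pairsWithin S) : 2 ≤ #S := by
  simp only [pairsWithin, mem_filter, mem_univ, true_and] at hp
  calc 2 = #{p.1.1, p.1.2} := (card_pair p.2.ne).symm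
    _ ≤ #S := card_le_card (insert_subset hp.1 (singleton_subset_iff.2 hp.2))

section MultiDegree

variable {ι : Type*} {y : ℕ} (ω : ι → VertexPair y) (F : Finset ι)

def multiDegree (v : Fin y) : ℕ :=
  ∑ e ∈ F, ((if (ω e).1.1 = v then 1 else 0) + (if (ω e).1.2 = v then 1 else 0))

lemma sum_multiDegree : ∑ v, multiDegree ω F v = 2 * #F := by
  simp only [multiDegree]
  rw [sum_comm, mul_comm, ← smul_eq_mul, ← sum_const]
  refine sum_congr rfl fun e _ => ?_
  rw [sum_add_distrib, sum_ite_eq, sum_ite_eq]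
  simp

lemma mem_pairsWithin_support {e : ι} (he : e ∈ F) :
    ω e ∈ pairsWithin {v | multiDegree ω F v ≠ 0} := by
  have hpos : ∀ v, (ω e).1.1 = v ∨ (ω e).1.2 = v → multiDegree ω F v ≠ 0 := by
    intro v hv
    refine (sum_pos' (fun _ _ => Nat.zero_le _) ⟨e, he, ?_⟩).ne'
    rcases hv with hv | hv <;> simp [hv]
  simp only [pairsWithin, mem_filter, mem_univ, true_and]
  exact ⟨hpos _ (Or.inl rfl), hpos _ (Or.inr rfl)⟩

lemma card_support_multiDegree_le (h : ∀ v, multiDegree ω F v = 0 ∨ 2 ≤ multiDegree ω F v) :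
    #{v | multiDegree ω F v ≠ 0} ≤ #F := by
  have : 2 * #{v | multiDegree ω F v ≠ 0} ≤ 2 * #F := by
    calc 2 * #{v | multiDegree ω F v ≠ 0} = ∑ v with multiDegree ω F v ≠ 0, 2 := by
          rw [sum_const, smul_eq_mul, mul_comm]
      _ ≤ ∑ v with multiDegree ω F v ≠ 0, multiDegree ω F v :=
          sum_le_sum fun v hv => (h v).resolve_left (mem_filter.1 hv).2
      _ ≤ ∑ v, multiDegree ω F v := sum_le_sum_of_subset (subset_univ _)
      _ = 2 * #F := sum_multiDegree ω F
  omega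

end MultiDegree

lemma BadGraph.exists_dense {x y : ℕ} {ω : Fin x → VertexPair y} (h : BadGraph x y ω) :
    ∃ S : Finset (Fin y), 2 ≤ #S ∧
      ∃ F ∈ powersetCard #S (univ : Finset (Fin x)), ∀ e ∈ F, ω e ∈ pairsWithin S := by
  rcases h with ⟨e, e', hne, heq⟩ | ⟨F, ⟨e₀, he₀⟩, hdeg⟩
  · refine ⟨{(ω e).1.1, (ω e).1.2}, (card_pair (ω e).2.ne).ge, {e, e'}, ?_, ?_⟩
    · simp [card_pair hne, card_pair (ω e).2.ne]
    · intro e'' he''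
      rcases mem_insert.1 he'' with rfl | he'' <;> simp_all [pairsWithin]
  · set S : Finset (Fin y) := {v | multiDegree ω F v ≠ 0}
    obtain ⟨F', hF'F, hF'⟩ := exists_subset_card_eq (card_support_multiDegree_le ω F hdeg)
    exact ⟨S, two_le_card_of_mem_pairsWithin (mem_pairsWithin_support ω F he₀), F',
      mem_powersetCard.2 ⟨subset_univ _, hF'⟩,
      fun e he => mem_pairsWithin_support ω F (hF'F he)⟩

open Classical in
lemma card_filter_badGraph_le (x y : ℕ) :
    #{ω | BadGraph x y ω} ≤ ∑ S : Finset (Fin y) with 2 ≤ #S,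
      ∑ F ∈ powersetCard #S (univ : Finset (Fin x)),
        #{ω : Fin x → VertexPair y | ∀ e ∈ F, ω e ∈ pairsWithin S} := by
  calc _ ≤ #((univ.filter fun S : Finset (Fin y) => 2 ≤ #S).biUnion fun S =>
          (powersetCard #S univ).biUnion fun F =>
            {ω : Fin x → VertexPair y | ∀ e ∈ F, ω e ∈ pairsWithin S}) := by
        refine card_le_card fun ω hω => ?_
        obtain ⟨S, hS, F, hF, hFS⟩ := BadGraph.exists_dense (mem_filter.1 hω).2
        simp only [mem_biUnion, mem_filter, mem_univ, true_and]
        exact ⟨S, hS, F, hF, hFS⟩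
    _ ≤ _ := card_biUnion_le.trans (sum_le_sum fun S _ => card_biUnion_le)

lemma card_filter_forall_mem_pairsWithin_div_le {x y : ℕ} (hy : 2 ≤ y) (S : Finset (Fin y))
    (F : Finset (Fin x)) :
    (#{ω : Fin x → VertexPair y | ∀ e ∈ F, ω e ∈ pairsWithin S} : ℝ)
        / (Fintype.card (VertexPair y) : ℝ) ^ x
      ≤ ((#S : ℝ) ^ 2 / Fintype.card (VertexPair y)) ^ #F := by
  set N := Fintype.card (VertexPair y)
  have hN : (0 : ℝ) < N := by
    have := sq_le_four_mul_card_vertexPair hy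
    have : (2 : ℝ) ≤ y := by exact_mod_cast hy
    nlinarith
  have hcount : #{ω : Fin x → VertexPair y | ∀ e ∈ F, ω e ∈ pairsWithin S} * N ^ #F
      = #(pairsWithin S) ^ #F * N ^ x := by
    -- the two filters differ only in how `∀ e ∈ F` is decided
    convert card_filter_forall_mem_mul_pow F (pairsWithin S) using 4
    exact (Fintype.card_fin x).symm
  rw [div_le_iff₀ (by positivity), div_pow, div_mul_eq_mul_div, le_div_iff₀ (by positivity),
    ← Nat.cast_pow, ← Nat.cast_mul, hcount]
  push_cast
  gcongr
  exact_mod_cast card_pairsWithin_le S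

lemma badProb_le_sum {x y : ℕ} (hy : 2 ≤ y) :
    badProb x y ≤ ∑ s ∈ Ico 2 (y + 1),
      (y.choose s * x.choose s : ℝ) * ((s : ℝ) ^ 2 / Fintype.card (VertexPair y)) ^ s := by
  set N := Fintype.card (VertexPair y)
  have hcard : ((univ : Finset (Fin x → VertexPair y)).card : ℝ) = (N : ℝ) ^ x := by
    simp [N]
  rw [badProb, hcard]
  calc _ ≤ (∑ S : Finset (Fin y) with 2 ≤ #S,
          ∑ F ∈ powersetCard #S (univ : Finset (Fin x)),
            (#{ω : Fin x → VertexPair y | ∀ e ∈ F, ω e ∈ pairsWithin S} : ℝ)) / N ^ x := by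
        gcongr
        exact_mod_cast card_filter_badGraph_le x y
    _ ≤ ∑ S : Finset (Fin y) with 2 ≤ #S, ∑ F ∈ powersetCard #S (univ : Finset (Fin x)),
          ((#S : ℝ) ^ 2 / N) ^ #S := by
        simp only [sum_div]
        gcongr with S _ F hF
        have := card_filter_forall_mem_pairsWithin_div_le hy S F
        rwa [(mem_powersetCard.1 hF).2] at this
    _ = ∑ s ∈ Ico 2 (y + 1), (y.choose s * x.choose s : ℝ) * ((s : ℝ) ^ 2 / N) ^ s := by
        simp only [sum_const, card_powersetCard, card_univ, Fintype.card_fin, nsmul_eq_mul]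
        rw [sum_filter, ← powerset_univ, sum_powerset_apply_card
          (fun s => if 2 ≤ s then (x.choose s : ℝ) * ((s : ℝ) ^ 2 / N) ^ s else 0),
          card_univ, Fintype.card_fin]
        simp only [nsmul_eq_mul, mul_ite, mul_zero, ← sum_filter, mul_assoc]
        congr 1
        ext s
        simp only [mem_filter, mem_range, mem_Ico]
        omega

lemma choose_mul_pow_self_le (n s : ℕ) : (n.choose s : ℝ) * s ^ s ≤ (Real.exp 1 * n) ^ s := by
  calc (n.choose s : ℝ) * s ^ s ≤ n ^ s / s.factorial * s ^ s := by
        gcongr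
        exact Nat.choose_le_pow_div s n
    _ = n ^ s * ((s : ℝ) ^ s / s.factorial) := by ring
    _ ≤ n ^ s * Real.exp s := by
        gcongr
        exact Real.pow_div_factorial_le_exp _ (Nat.cast_nonneg s) s
    _ = (Real.exp 1 * n) ^ s := by
        rw [← Real.exp_one_pow, mul_pow, mul_comm]

lemma choose_mul_choose_mul_div_pow_le {x y : ℕ} (hy : 2 ≤ y) (s : ℕ) :
    (y.choose s * x.choose s : ℝ) * ((s : ℝ) ^ 2 / Fintype.card (VertexPair y)) ^ s
      ≤ (30 * x / y) ^ s := by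
  set N := Fintype.card (VertexPair y)
  have hN : (y : ℝ) ^ 2 ≤ 4 * N := sq_le_four_mul_card_vertexPair hy
  have he : Real.exp 1 ^ 2 ≤ 7.5 := by nlinarith [Real.exp_one_lt_d9, Real.exp_pos 1]
  calc (y.choose s * x.choose s : ℝ) * ((s : ℝ) ^ 2 / N) ^ s
      = ((y.choose s : ℝ) * s ^ s) * ((x.choose s : ℝ) * s ^ s) / (N : ℝ) ^ s := by
        rw [div_pow, ← pow_mul, mul_comm 2 s, pow_mul']
        ring
    _ ≤ (Real.exp 1 * y) ^ s * (Real.exp 1 * x) ^ s / ((y : ℝ) ^ 2 / 4) ^ s := by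
        gcongr
        · exact choose_mul_pow_self_le y s
        · exact choose_mul_pow_self_le x s
        · linarith
    _ = (4 * Real.exp 1 ^ 2 * x / y) ^ s := by
        rw [← mul_pow, ← div_pow]
        congr 1
        field_simp
    _ ≤ (30 * x / y) ^ s := by
        gcongr
        linarith

lemma sum_Ico_two_pow_le {r : ℝ} (hr₀ : 0 ≤ r) (hr : r ≤ 1 / 2) (n : ℕ) :
    ∑ s ∈ Ico 2 n, r ^ s ≤ 2 * r ^ 2 :=
  calc ∑ s ∈ Ico 2 n, r ^ s ≤ r ^ 2 / (1 - r) := geom_sum_Ico_le_of_lt_one hr₀ (by linarith)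
    _ ≤ 2 * r ^ 2 := by
        rw [div_le_iff₀ (by linarith)]
        nlinarith [sq_nonneg r]

open Classical in
lemma badProb_le_one (x y : ℕ) : badProb x y ≤ 1 :=
  div_le_one_of_le₀ (by exact_mod_cast card_le_card (filter_subset _ _)) (Nat.cast_nonneg _)

lemma badProb_le {x y : ℕ} (hy : 2 ≤ y) : badProb x y ≤ 4 * (30 * x / y) ^ 2 := by
  set r : ℝ := 30 * x / y
  rcases le_or_gt r (1 / 2) with hr | hr
  · calc badProb x y ≤ ∑ s ∈ Ico 2 (y + 1), r ^ s :=
          (badProb_le_sum hy).trans (sum_le_sum fun s _ => choose_mul_choose_mul_div_pow_le hy s)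
      _ ≤ 2 * r ^ 2 := sum_Ico_two_pow_le (by positivity) hr _
      _ ≤ 4 * r ^ 2 := by nlinarith [sq_nonneg r]
  · calc badProb x y ≤ 1 := badProb_le_one x y
      _ ≤ 4 * r ^ 2 := by nlinarith

lemma div_sq_le_quarter_of_sqrt_le {C ε c : ℝ} (hC : 0 < C) (hε : 0 < ε)
    (hc : √(4 * C / ε) ≤ c) : C / c ^ 2 ≤ ε / 4 := by
  have hc0 : 0 < c := (Real.sqrt_pos.2 (by positivity)).trans_le hc
  have hc2 : 4 * C / ε ≤ c ^ 2 := (Real.sqrt_le_left hc0.le).1 hc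
  rw [div_le_iff₀ hε] at hc2
  rw [div_le_iff₀ (by positivity)]
  linarith

/-- With `c = y/x`, the probability that the random multigraph is not simple or
contains a cycle is `O(1/c²)`; in particular choosing `c = Θ(√(1/ε))`, namely
`y ≥ √(4C/ε)·x`, makes this failure probability at most `ε/4`. -/
theorem random_sparse_graph_failure_prob :
    ∃ C : ℝ, 0 < C ∧
      ∀ (x y : ℕ) (c : ℝ), 1 ≤ x → 2 ≤ y → c = (y : ℝ) / (x : ℝ) →
        (badProb x y ≤ C / c ^ 2) ∧
        (∀ ε : ℝ, 0 < ε → ε ≤ 1 →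
          Real.sqrt (4 * C / ε) * (x : ℝ) ≤ (y : ℝ) →
          badProb x y ≤ ε / 4) := by
  refine ⟨3600, by norm_num, fun x y c hx hy hc => ?_⟩
  have hx0 : (0 : ℝ) < x := by exact_mod_cast hx
  have hbound : badProb x y ≤ 3600 / c ^ 2 := by
    convert badProb_le hy using 1
    rw [hc]
    field_simp
    ring
  refine ⟨hbound, fun ε hε _ hxy =>
    hbound.trans (div_sq_le_quarter_of_sqrt_le (by norm_num) hε ?_)⟩
  rwa [hc, le_div_iff₀ hx0]
end
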